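/- Fix ι ∈ {identity, complex conjugation} on ℂ and ε ∈ {1,−1}. Let V be an isotypical H-module of type π equipped with an H-invariant nondegenerate (ι,ε)-symmetric form B, and suppose π admits an H-invariant nondegenerate (ι,ε)-symmetric form. Then V contains at least one irreducible H-invariant subspace on which the restriction of B is nondegenerate. -/

import Mathlib

/-!
Let `W₁ ⊆ V` be irreducible. The radical of `B|W₁` is invariant, so either `B|W₁` is
nondegenerate or `W₁` is isotropic. In the isotropic case the `B`-orthogonal of `W₁` is an
invariant subspace, and an irreducible `W₂` inside an invariant complement of it pairs
nondegenerately with `W₁`; unless `B|W₂` is nondegenerate, `W₂` is isotropic as well.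
Both are copies of `π`, via embeddings `i, j : π → V`. By Schur's lemma the pairing
`(x, y) ↦ B (i x) (j y)` is a multiple of the invariant form `b` of `π`; rescaling `j` makes it
equal to `b`. The `(ι,ε)`-symmetry of `B` and of `b` then gives
`B (i x + j x) (i y + j y) = 2 b x y`, so the diagonal copy `{i x + j x}` of `π` is an
irreducible subspace on which `B` is nondegenerate.
-/

variable {H V P : Type*}

/-- `U` is invariant under the representation `ρ`. -/
def Invt [Group H] [AddCommGroup V] [Module ℂ V] (ρ : Representation ℂ H V)
    (U : Submodule ℂ V) : Prop :=
  ∀ (h : H) (v : V), v ∈ U → ρ h v ∈ U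

/-- `V` is a semisimple `H`-module. -/
def Semisimple [Group H] [AddCommGroup V] [Module ℂ V] (ρ : Representation ℂ H V) : Prop :=
  ∀ U : Submodule ℂ V, Invt ρ U → ∃ U', Invt ρ U' ∧ IsCompl U U'

/-- `U` is an irreducible invariant subspace. -/
def IrredSub [Group H] [AddCommGroup V] [Module ℂ V] (ρ : Representation ℂ H V)
    (U : Submodule ℂ V) : Prop :=
  Invt ρ U ∧ U ≠ ⊥ ∧ ∀ U' ≤ U, Invt ρ U' → U' = ⊥ ∨ U' = U

/-- The invariant subspace `U ⊆ V` is isomorphic, as an `H`-module, to the external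
`H`-module `P`. -/
def RepIsoExt [Group H] [AddCommGroup V] [Module ℂ V] [AddCommGroup P] [Module ℂ P]
    (ρ : Representation ℂ H V) (ρP : Representation ℂ H P) (U : Submodule ℂ V) : Prop :=
  ∃ e : U ≃ₗ[ℂ] P, ∀ (h : H) (v : V) (hv : v ∈ U) (hv' : ρ h v ∈ U),
    e ⟨ρ h v, hv'⟩ = ρP h (e ⟨v, hv⟩)

open Representation

theorem exists_forall_apply_eq_mul_of_separatingRight {K M : Type*} [Field K] [IsAlgClosed K]
    [AddCommGroup M] [Module K M] [FiniteDimensional K M] [Nontrivial M] {σ : K →+* K}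
    (b c : M →ₛₗ[σ] M →ₗ[K] K) (hc : c.SeparatingRight) :
    ∃ μ : K, ∃ y ≠ 0, ∀ x, b x y = μ * c x y := by
  -- coordinates against a basis stand in for the (semilinear) dual of `M`
  let β := Module.finBasis K M
  let coords (d : M →ₛₗ[σ] M →ₗ[K] K) : M →ₗ[K] Fin (Module.finrank K M) → K :=
    LinearMap.pi fun i => d (β i)
  have apply_eq_of_coords_eq {d d' : M →ₛₗ[σ] M →ₗ[K] K} {y y' : M}
      (h : coords d y = coords d' y') (x : M) : d x y = d' x y' :=
    LinearMap.congr_fun (β.ext (f₁ := d.flip y) (f₂ := d'.flip y') fun i => congr_fun h i) x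
  have hinj : Function.Injective (coords c) := by
    refine (injective_iff_map_eq_zero _).2 fun y hy => hc y fun x => ?_
    simpa using apply_eq_of_coords_eq (d' := c) (y' := 0) (by simpa using hy) x
  let e := LinearMap.linearEquivOfInjective (coords c) hinj (by simp)
  obtain ⟨μ, hμ⟩ := Module.End.exists_eigenvalue (e.symm.toLinearMap ∘ₗ coords b)
  obtain ⟨y, hy⟩ := hμ.exists_hasEigenvector
  have hcoords : coords b y = coords c (μ • y) := by
    rw [← hy.apply_eq_smul]
    exact (e.apply_symm_apply _).symm
  exact ⟨μ, y, hy.2, fun x => by simpa using apply_eq_of_coords_eq hcoords x⟩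

section Representations

variable [Group H] [AddCommGroup V] [Module ℂ V] [AddCommGroup P] [Module ℂ P]

def IsInvariantForm (ρ : Representation ℂ H V) {I₁ I₂ : ℂ →+* ℂ}
    (B : V →ₛₗ[I₁] V →ₛₗ[I₂] ℂ) : Prop :=
  ∀ (h : H) (v w : V), B (ρ h v) (ρ h w) = B v w

variable {ρ : Representation ℂ H V} {ρP : Representation ℂ H P} {σ : ℂ →+* ℂ}

lemma Invt.inf {U U' : Submodule ℂ V} (hU : Invt ρ U) (hU' : Invt ρ U') : Invt ρ (U ⊓ U') :=
  fun h v hv => ⟨hU h v hv.1, hU' h v hv.2⟩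

namespace IsInvariantForm

variable {I₁ I₂ : ℂ →+* ℂ} {B : V →ₛₗ[I₁] V →ₛₗ[I₂] ℂ}

lemma apply_right (hB : IsInvariantForm ρ B) (h : H) (v w : V) :
    B v (ρ h w) = B (ρ h⁻¹ v) w := by
  rw [← hB h (ρ h⁻¹ v) w, self_inv_apply]

lemma flip (hB : IsInvariantForm ρ B) : IsInvariantForm ρ B.flip :=
  fun h v w => hB h w v

lemma invt_orthogonalBilin (hB : IsInvariantForm ρ B) {W : Submodule ℂ V} (hW : Invt ρ W) :
    Invt ρ (W.orthogonalBilin B) := fun h w hw v hv => by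
  rw [Submodule.mem_orthogonalBilin_iff] at hw
  rw [hB.apply_right]
  exact hw _ (hW h⁻¹ v hv)

lemma comp_compl₂ {B : V →ₛₗ[σ] V →ₗ[ℂ] ℂ} (hB : IsInvariantForm ρ B)
    {i j : P →ₗ[ℂ] V} (hi : ρP.IsIntertwiningMap ρ i) (hj : ρP.IsIntertwiningMap ρ j) :
    IsInvariantForm ρP ((B.comp i).compl₂ j) := fun h x y => by
  simp [hi.isIntertwining, hj.isIntertwining, hB h]

end IsInvariantForm

theorem exists_eq_smul_of_isInvariantForm [FiniteDimensional ℂ P]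
    (hP : ∀ U : Submodule ℂ P, Invt ρP U → U = ⊥ ∨ U = ⊤)
    {b c : P →ₛₗ[σ] P →ₗ[ℂ] ℂ} (hb : IsInvariantForm ρP b) (hc : IsInvariantForm ρP c)
    (hcsep : c.SeparatingRight) : ∃ μ : ℂ, b = μ • c := by
  cases subsingleton_or_nontrivial P
  · exact ⟨0, LinearMap.ext₂ fun x y => by simp [Subsingleton.elim x 0]⟩
  obtain ⟨μ, y, hy, hμ⟩ := exists_forall_apply_eq_mul_of_separatingRight b c hcsep
  have hd : IsInvariantForm ρP (b - μ • c) := fun h v w => by simp [hb h, hc h]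
  -- the right radical of `b - μ • c` is invariant and contains `y ≠ 0`
  have hR := hd.invt_orthogonalBilin (W := ⊤) fun _ _ _ => trivial
  obtain hR | hR := hP _ hR
  · refine absurd ((Submodule.mem_bot ℂ).1 (hR ▸ ?_ : y ∈ (⊥ : Submodule ℂ P))) hy
    simp [hμ]
  · refine ⟨μ, LinearMap.ext₂ fun x z => ?_⟩
    have hz : z ∈ (⊤ : Submodule ℂ P).orthogonalBilin (b - μ • c) := by
      rw [hR]; exact Submodule.mem_top
    simpa [sub_eq_zero] using hz x Submodule.mem_top

theorem exists_irredSub_le [FiniteDimensional ℂ V] {U : Submodule ℂ V} (hU : Invt ρ U)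
    (hU0 : U ≠ ⊥) : ∃ W ≤ U, IrredSub ρ W := by
  obtain ⟨W, ⟨hWU, hW, hW0⟩, hmin⟩ := wellFounded_lt.has_min
    {W : Submodule ℂ V | W ≤ U ∧ Invt ρ W ∧ W ≠ ⊥} ⟨U, le_rfl, hU, hU0⟩
  refine ⟨W, hWU, hW, hW0, fun W' hW'W hW' => ?_⟩
  by_contra! h
  exact hmin W' ⟨hW'W.trans hWU, hW', h.1⟩ (lt_of_le_of_ne hW'W h.2)

theorem IrredSub.nondegenerate_or_isotropic {W : Submodule ℂ V} (hW : IrredSub ρ W)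
    {B : V →ₛₗ[σ] V →ₗ[ℂ] ℂ} (hB : IsInvariantForm ρ B) :
    (∀ v ∈ W, (∀ w ∈ W, B v w = 0) → v = 0) ∨ ∀ v ∈ W, ∀ w ∈ W, B v w = 0 := by
  obtain hR | hR := hW.2.2 _ inf_le_left (hW.1.inf (hB.flip.invt_orthogonalBilin hW.1))
  · refine .inl fun v hv hvW => ?_
    have : v ∈ W ⊓ W.orthogonalBilin B.flip := ⟨hv, hvW⟩
    simpa [hR] using this
  · exact .inr fun v hv w hw => (hR.symm ▸ hv : v ∈ W ⊓ W.orthogonalBilin B.flip).2 w hw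

theorem exists_irredSub_inf_orthogonalBilin_eq_bot [FiniteDimensional ℂ V] (hss : Semisimple ρ)
    {B : V →ₛₗ[σ] V →ₗ[ℂ] ℂ} (hB : IsInvariantForm ρ B) (hBnd : B.SeparatingLeft)
    {W : Submodule ℂ V} (hW : Invt ρ W) (hW0 : W ≠ ⊥) :
    ∃ W', IrredSub ρ W' ∧ W' ⊓ W.orthogonalBilin B = ⊥ := by
  obtain ⟨Z, hZ, hYZ⟩ := hss _ (hB.invt_orthogonalBilin hW)
  have hZ0 : Z ≠ ⊥ := by
    rintro rfl
    have hY : W.orthogonalBilin B = ⊤ := eq_top_of_isCompl_bot hYZ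
    refine hW0 (eq_bot_iff.2 fun v hv => hBnd v fun w => ?_)
    exact (hY ▸ Submodule.mem_top : w ∈ W.orthogonalBilin B) v hv
  obtain ⟨W', hW'Z, hW'⟩ := exists_irredSub_le hZ hZ0
  exact ⟨W', hW', le_bot_iff.1 (hYZ.symm.inf_eq_bot ▸ inf_le_inf_right _ hW'Z)⟩

theorem RepIsoExt.exists_isIntertwiningMap {U : Submodule ℂ V} (hU : Invt ρ U)
    (he : RepIsoExt ρ ρP U) : ∃ i : P →ₗ[ℂ] V,
      Function.Injective i ∧ ρP.IsIntertwiningMap ρ i ∧ LinearMap.range i = U := by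
  obtain ⟨e, he⟩ := he
  refine ⟨U.subtype ∘ₗ e.symm.toLinearMap, U.injective_subtype.comp e.symm.injective,
    ⟨fun h x => ?_⟩, by simp [LinearMap.range_comp]⟩
  obtain ⟨v, rfl⟩ := e.surjective x
  simp [← he h v v.2 (hU h v v.2)]

theorem irredSub_range_of_injective [Nontrivial P]
    (hP : ∀ U : Submodule ℂ P, Invt ρP U → U = ⊥ ∨ U = ⊤)
    {f : P →ₗ[ℂ] V} (hf : Function.Injective f) (hfρ : ρP.IsIntertwiningMap ρ f) :
    IrredSub ρ (LinearMap.range f) := by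
  refine ⟨?_, ?_, fun U hU hUρ => ?_⟩
  · rintro h _ ⟨x, rfl⟩
    exact ⟨ρP h x, hfρ.isIntertwining h x⟩
  · obtain ⟨x, hx⟩ := exists_ne (0 : P)
    exact fun h0 => hx (hf (by simp [LinearMap.range_eq_bot.1 h0]))
  · have hc : Invt ρP (U.comap f) := fun h x hx => by
      simpa [hfρ.isIntertwining] using hUρ h _ hx
    rw [← Submodule.map_comap_eq_self hU]
    obtain h | h := hP _ hc <;> simp [h]

end Representations

section Hyperbolic

variable [Group H] [AddCommGroup V] [Module ℂ V] [AddCommGroup P] [Module ℂ P]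
  {σ : ℂ →+* ℂ} {ε : ℂ} {B : V →ₛₗ[σ] V →ₗ[ℂ] ℂ} {b : P →ₛₗ[σ] P →ₗ[ℂ] ℂ}
  {i j : P →ₗ[ℂ] V}

theorem separatingRight_comp_compl₂ (hj : Function.Injective j)
    (h : LinearMap.range j ⊓ (LinearMap.range i).orthogonalBilin B = ⊥) :
    ((B.comp i).compl₂ j).SeparatingRight := fun y hy => by
  have hy' : j y ∈ LinearMap.range j ⊓ (LinearMap.range i).orthogonalBilin B :=
    ⟨⟨y, rfl⟩, by rintro _ ⟨x, rfl⟩; exact hy x⟩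
  rw [h, Submodule.mem_bot] at hy'
  exact hj (hy'.trans (map_zero j).symm)

theorem apply_add_apply_add_eq_two_mul (hBsym : ∀ v w, B w v = ε * σ (B v w))
    (hbsym : ∀ x y, b y x = ε * σ (b x y)) (hi : ∀ x y, B (i x) (i y) = 0)
    (hj : ∀ x y, B (j x) (j y) = 0) (hij : ∀ x y, B (i x) (j y) = b x y) (x y : P) :
    B ((i + j) x) ((i + j) y) = 2 * b x y := by
  simp only [LinearMap.add_apply, map_add, hi, hj, hij]
  rw [hBsym (i y), hij, ← hbsym]
  ring

theorem irredSub_range_add_of_isotropic [Nontrivial P] {ρ : Representation ℂ H V}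
    {ρP : Representation ℂ H P} (hP : ∀ U : Submodule ℂ P, Invt ρP U → U = ⊥ ∨ U = ⊤)
    (hBsym : ∀ v w, B w v = ε * σ (B v w)) (hbsym : ∀ x y, b y x = ε * σ (b x y))
    (hbnd : b.SeparatingLeft)
    (hiρ : ρP.IsIntertwiningMap ρ i) (hjρ : ρP.IsIntertwiningMap ρ j)
    (hi : ∀ x y, B (i x) (i y) = 0) (hj : ∀ x y, B (j x) (j y) = 0)
    (hij : ∀ x y, B (i x) (j y) = b x y) :
    IrredSub ρ (LinearMap.range (i + j)) ∧ ∀ v ∈ LinearMap.range (i + j),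
      (∀ w ∈ LinearMap.range (i + j), B v w = 0) → v = 0 := by
  have hker : ∀ x, (∀ y, B ((i + j) x) ((i + j) y) = 0) → x = 0 := fun x hx =>
    hbnd x fun y => by
      have hxy := hx y
      rwa [apply_add_apply_add_eq_two_mul hBsym hbsym hi hj hij, mul_eq_zero,
        or_iff_right two_ne_zero] at hxy
  have hinj : Function.Injective (i + j) :=
    (injective_iff_map_eq_zero _).2 fun x hx => hker x fun y => by rw [hx, map_zero]; rfl
  have hρ : ρP.IsIntertwiningMap ρ (i + j) :=
    ⟨fun h x => by simp [hiρ.isIntertwining, hjρ.isIntertwining]⟩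
  refine ⟨irredSub_range_of_injective hP hinj hρ, ?_⟩
  rintro _ ⟨x, rfl⟩ hx
  rw [hker x fun y => hx _ ⟨y, rfl⟩, map_zero]

end Hyperbolic

theorem stmt_9_general [Group H] [AddCommGroup V] [Module ℂ V] [FiniteDimensional ℂ V]
    [Nontrivial V] [AddCommGroup P] [Module ℂ P] [FiniteDimensional ℂ P]
    (σ : ℂ →+* ℂ) (ε : ℂ)
    (ρ : Representation ℂ H V) (hss : Semisimple ρ)
    (ρP : Representation ℂ H P)
    (hPirr : ∀ U : Submodule ℂ P, (∀ (h : H) (v : P), v ∈ U → ρP h v ∈ U) →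
      U = ⊥ ∨ U = ⊤)
    -- V is isotypical of type π
    (hisot : ∀ U : Submodule ℂ V, IrredSub ρ U → RepIsoExt ρ ρP U)
    -- π admits an invariant nondegenerate (ι,ε)-symmetric form
    (hPform : ∃ b : P → P → ℂ,
      (∀ v v' w, b (v + v') w = b v w + b v' w) ∧
      (∀ v w w', b v (w + w') = b v w + b v w') ∧
      (∀ (a : ℂ) (v w : P), b (a • v) w = σ a * b v w) ∧
      (∀ (a : ℂ) (v w : P), b v (a • w) = a * b v w) ∧
      (∀ (h : H) (v w : P), b (ρP h v) (ρP h w) = b v w) ∧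
      (∀ v w, b w v = ε * σ (b v w)) ∧
      (∀ v, (∀ w, b v w = 0) → v = 0))
    -- B is an invariant nondegenerate (ι,ε)-symmetric form on V
    (B : V → V → ℂ)
    (hB1 : ∀ v v' w, B (v + v') w = B v w + B v' w)
    (hB2 : ∀ v w w', B v (w + w') = B v w + B v w')
    (hB3 : ∀ (a : ℂ) (v w : V), B (a • v) w = σ a * B v w)
    (hB4 : ∀ (a : ℂ) (v w : V), B v (a • w) = a * B v w)
    (hBinv : ∀ (h : H) (v w : V), B (ρ h v) (ρ h w) = B v w)
    (hBsym : ∀ v w, B w v = ε * σ (B v w))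
    (hBnd : ∀ v, (∀ w, B v w = 0) → v = 0) :
    ∃ W : Submodule ℂ V, IrredSub ρ W ∧
      ∀ v ∈ W, (∀ w ∈ W, B v w = 0) → v = 0 := by
  obtain ⟨b, hb1, hb2, hb3, hb4, hbinv, hbsym, hbnd⟩ := hPform
  let B' : V →ₛₗ[σ] V →ₗ[ℂ] ℂ := LinearMap.mk₂'ₛₗ σ (RingHom.id ℂ) B hB1 hB3 hB2 hB4
  let b' : P →ₛₗ[σ] P →ₗ[ℂ] ℂ := LinearMap.mk₂'ₛₗ σ (RingHom.id ℂ) b hb1 hb3 hb2 hb4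
  have hB' : IsInvariantForm ρ B' := hBinv
  obtain ⟨W₁, -, hW₁⟩ :=
    exists_irredSub_le (ρ := ρ) (U := ⊤) (fun _ _ _ => trivial) top_ne_bot
  obtain hnd₁ | hiso₁ := hW₁.nondegenerate_or_isotropic hB'
  · exact ⟨W₁, hW₁, hnd₁⟩
  obtain ⟨W₂, hW₂, hW₁₂⟩ :=
    exists_irredSub_inf_orthogonalBilin_eq_bot hss hB' hBnd hW₁.1 hW₁.2.1
  obtain hnd₂ | hiso₂ := hW₂.nondegenerate_or_isotropic hB'
  · exact ⟨W₂, hW₂, hnd₂⟩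
  obtain ⟨i, -, hiρ, rfl⟩ := (hisot W₁ hW₁).exists_isIntertwiningMap hW₁.1
  obtain ⟨j, hj, hjρ, rfl⟩ := (hisot W₂ hW₂).exists_isIntertwiningMap hW₂.1
  have : Nontrivial P := (subsingleton_or_nontrivial P).resolve_left fun _ =>
    hW₁.2.1 (LinearMap.range_eq_bot.2 (Subsingleton.elim _ _))
  obtain ⟨ν, hν⟩ := exists_eq_smul_of_isInvariantForm hPirr (b := b') hbinv
    (hB'.comp_compl₂ hiρ hjρ) (separatingRight_comp_compl₂ hj hW₁₂)
  exact ⟨_, irredSub_range_add_of_isotropic (b := b') (j := ν • j) hPirr hBsym hbsym hbnd hiρ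
    ⟨fun h x => by simp [hjρ.isIntertwining]⟩ (fun x y => hiso₁ _ ⟨x, rfl⟩ _ ⟨y, rfl⟩)
    (fun x y => by simp [B', hiso₂ _ ⟨x, rfl⟩ _ ⟨y, rfl⟩])
    (fun x y => by simpa [B', b'] using (LinearMap.congr_fun₂ hν x y).symm)⟩

/-- Let `(V,B)` be an isotypical `H`-module of type `π` with an invariant
nondegenerate `(ι,ε)`-symmetric form, where `π` admits an invariant nondegenerate
`(ι,ε)`-symmetric form. Then `V` contains an irreducible invariant subspace on which the
restriction of `B` is nondegenerate. -/
theorem stmt_9 [Group H] [AddCommGroup V] [Module ℂ V] [FiniteDimensional ℂ V]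
    [Nontrivial V] [AddCommGroup P] [Module ℂ P] [FiniteDimensional ℂ P]
    (σ : ℂ →+* ℂ) (hσ : σ = RingHom.id ℂ ∨ σ = starRingEnd ℂ)
    (ε : ℂ) (hε : ε = 1 ∨ ε = -1)
    (ρ : Representation ℂ H V) (hss : Semisimple ρ)
    (ρP : Representation ℂ H P)
    (hPss : ∀ U : Submodule ℂ P, (∀ (h : H) (v : P), v ∈ U → ρP h v ∈ U) →
      ∃ U', (∀ (h : H) (v : P), v ∈ U' → ρP h v ∈ U') ∧ IsCompl U U')
    (hPirr : ∀ U : Submodule ℂ P, (∀ (h : H) (v : P), v ∈ U → ρP h v ∈ U) →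
      U = ⊥ ∨ U = ⊤)
    -- V is isotypical of type π
    (hisot : ∀ U : Submodule ℂ V, IrredSub ρ U → RepIsoExt ρ ρP U)
    -- π admits an invariant nondegenerate (ι,ε)-symmetric form
    (hPform : ∃ b : P → P → ℂ,
      (∀ v v' w, b (v + v') w = b v w + b v' w) ∧
      (∀ v w w', b v (w + w') = b v w + b v w') ∧
      (∀ (a : ℂ) (v w : P), b (a • v) w = σ a * b v w) ∧
      (∀ (a : ℂ) (v w : P), b v (a • w) = a * b v w) ∧
      (∀ (h : H) (v w : P), b (ρP h v) (ρP h w) = b v w) ∧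
      (∀ v w, b w v = ε * σ (b v w)) ∧
      (∀ v, (∀ w, b v w = 0) → v = 0))
    -- B is an invariant nondegenerate (ι,ε)-symmetric form on V
    (B : V → V → ℂ)
    (hB1 : ∀ v v' w, B (v + v') w = B v w + B v' w)
    (hB2 : ∀ v w w', B v (w + w') = B v w + B v w')
    (hB3 : ∀ (a : ℂ) (v w : V), B (a • v) w = σ a * B v w)
    (hB4 : ∀ (a : ℂ) (v w : V), B v (a • w) = a * B v w)
    (hBinv : ∀ (h : H) (v w : V), B (ρ h v) (ρ h w) = B v w)
    (hBsym : ∀ v w, B w v = ε * σ (B v w))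
    (hBnd : ∀ v, (∀ w, B v w = 0) → v = 0) :
    ∃ W : Submodule ℂ V, IrredSub ρ W ∧
      ∀ v ∈ W, (∀ w ∈ W, B v w = 0) → v = 0 :=
  stmt_9_general σ ε ρ hss ρP hPirr hisot hPform B hB1 hB2 hB3 hB4 hBinv hBsym hBnd
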